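/- Fix m ≥ 2 and n ≥ 0, and let r_m = m mod 2. The average of the longest-increasing-subsequence length over the simple m-nary butterfly group satisfies (1/m^n) · Σ_{σ ∈ B_{s,n}^{(m)}} L(σ) = ((3m² + r_m)/(4m))^n. -/

import Mathlib

/-- Kronecker product of permutations: `(i, r) ↦ (σ i, π r)` under the
row-major identification `Fin (a * b) ≃ Fin a × Fin b`. -/
def permKron {a b : ℕ} (σ : Equiv.Perm (Fin a)) (π : Equiv.Perm (Fin b)) :
    Equiv.Perm (Fin (a * b)) :=
  finProdFinEquiv.symm.trans ((Equiv.prodCongr σ π).trans finProdFinEquiv)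

/-- Direct (block) sum of permutations: `(i, r) ↦ (i, π i r)`. -/
def permBlockSum {a b : ℕ} (π : Fin a → Equiv.Perm (Fin b)) :
    Equiv.Perm (Fin (a * b)) :=
  finProdFinEquiv.symm.trans ((Equiv.prodCongrRight π).trans finProdFinEquiv)

/-- The simple `m`-nary butterfly permutations of `Fin (m ^ n)`:
Kronecker products `τ^{a₁} ⊗ ⋯ ⊗ τ^{aₙ}` of powers of the standard `m`-cycle `τ = finRotate m`. -/
def simpleButterfly (m : ℕ) : (n : ℕ) → Set (Equiv.Perm (Fin (m ^ n)))
  | 0 => {1}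
  | n + 1 =>
    {σ | ∃ (a : ℤ) (π : Equiv.Perm (Fin (m ^ n))), π ∈ simpleButterfly m n ∧
      σ = (finCongr (pow_succ' m n).symm).permCongr (permKron (finRotate m ^ a) π)}

/-- The nonsimple `m`-nary butterfly permutations of `Fin (m ^ n)`:
`B₀ = {1}`, `B_{n+1} = {(τ^a ⊗ id) ∘ (σ₁ ⊕ ⋯ ⊕ σ_m) : σᵢ ∈ B_n}`. -/
def nonsimpleButterfly (m : ℕ) : (n : ℕ) → Set (Equiv.Perm (Fin (m ^ n)))
  | 0 => {1}
  | n + 1 =>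
    {σ | ∃ (a : ℤ) (π : Fin m → Equiv.Perm (Fin (m ^ n))),
      (∀ i, π i ∈ nonsimpleButterfly m n) ∧
      σ = (finCongr (pow_succ' m n).symm).permCongr
        (permKron (finRotate m ^ a) 1 * permBlockSum π)}

/-- The length of the longest increasing subsequence of a permutation. -/
noncomputable def LIS {M : ℕ} (σ : Equiv.Perm (Fin M)) : ℕ :=
  sSup {k | ∃ t : Finset (Fin M), t.card = k ∧ StrictMonoOn (⇑σ) ↑t}

/-- The length of the longest decreasing subsequence of a permutation. -/
noncomputable def LDS {M : ℕ} (σ : Equiv.Perm (Fin M)) : ℕ :=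
  sSup {k | ∃ t : Finset (Fin M), t.card = k ∧ StrictAntiOn (⇑σ) ↑t}

/-- The number of cycles in the disjoint cycle decomposition of `σ`,
counting fixed points as cycles of length 1. -/
def numCycles {M : ℕ} (σ : Equiv.Perm (Fin M)) : ℕ :=
  Multiset.card σ.cycleType + (Finset.univ.filter fun x => σ x = x).card

/-- The number of fixed points of `σ`. -/
def numFixed {M : ℕ} (σ : Equiv.Perm (Fin M)) : ℕ :=
  (Finset.univ.filter fun x => σ x = x).card


/-!
`L` is multiplicative under Kronecker products: under the lexicographic identification
`Fin (a * b) ≃ Fin a × Fin b`, an increasing subsequence of `σ ⊗ π` projects onto an increasing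
subsequence of `σ` whose fibres are increasing subsequences of `π`, and conversely a product of
increasing subsequences is increasing. Moreover `L(τ_m ^ b) = max(b, m - b)`: `τ_m ^ b` is
increasing on the first `m - b` and on the last `b` positions, and sends the first block above
the second, so an increasing subsequence stays in one block. Hence the sum of `L` over
`B_{s,n}^{(m)}` factors as `(∑_{b < m} max(b, m - b))ⁿ`, and `4 ∑_{b < m} max(b, m - b) = 3m² + r_m`.
-/

open Finset

section LIS

variable {M : ℕ} (σ : Equiv.Perm (Fin M))

theorem bddAbove_LIS : BddAbove {k | ∃ t : Finset (Fin M), #t = k ∧ StrictMonoOn σ t} :=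
  ⟨M, by rintro _ ⟨t, rfl, -⟩; simpa using card_le_univ t⟩

theorem card_le_LIS {t : Finset (Fin M)} (h : StrictMonoOn σ t) : #t ≤ LIS σ :=
  le_csSup (bddAbove_LIS σ) ⟨t, rfl, h⟩

theorem exists_card_eq_LIS : ∃ t : Finset (Fin M), #t = LIS σ ∧ StrictMonoOn σ t :=
  Nat.sSup_mem (by exact ⟨0, ∅, rfl, by simp [StrictMonoOn]⟩) (bddAbove_LIS σ)

theorem LIS_le {k : ℕ} (h : ∀ t : Finset (Fin M), StrictMonoOn σ t → #t ≤ k) : LIS σ ≤ k := by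
  obtain ⟨t, ht, hmono⟩ := exists_card_eq_LIS σ
  exact ht ▸ h t hmono

theorem LIS_one : LIS (1 : Equiv.Perm (Fin M)) = M :=
  le_antisymm (LIS_le _ fun t _ => by simpa using card_le_univ t)
    (by simpa using card_le_LIS 1 (t := univ) (by simpa using strictMono_id.strictMonoOn Set.univ))

theorem LIS_permCongr_finCongr {N : ℕ} (h : M = N) :
    LIS ((finCongr h).permCongr σ) = LIS σ := by
  subst h; rfl

end LIS

section Kronecker

variable {a b : ℕ}

theorem finProdFinEquiv_lt_iff {p q : Fin a × Fin b} :
    finProdFinEquiv p < finProdFinEquiv q ↔ toLex p < toLex q := by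
  suffices StrictMono fun p : Fin a ×ₗ Fin b => finProdFinEquiv (ofLex p) from this.lt_iff_lt
  intro p q h
  simp only [Fin.lt_def, finProdFinEquiv_apply_val]
  rcases Prod.Lex.lt_iff.mp h with h | ⟨h, h'⟩
  · have := (ofLex p).2.isLt
    rw [Fin.lt_def] at h
    nlinarith
  · rw [h]
    exact Nat.add_lt_add_right h' _

variable (σ : Equiv.Perm (Fin a)) (π : Equiv.Perm (Fin b))

theorem permKron_apply (p : Fin a × Fin b) :
    permKron σ π (finProdFinEquiv p) = finProdFinEquiv (Prod.map σ π p) := by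
  simp [permKron]

theorem permKron_lt_permKron_iff {p q : Fin a × Fin b} :
    permKron σ π (finProdFinEquiv p) < permKron σ π (finProdFinEquiv q) ↔
      toLex (Prod.map σ π p) < toLex (Prod.map σ π q) := by
  rw [permKron_apply, permKron_apply, finProdFinEquiv_lt_iff]

theorem LIS_permKron_le : LIS (permKron σ π) ≤ LIS σ * LIS π := by
  refine LIS_le _ fun t ht => ?_
  set T := t.map finProdFinEquiv.symm.toEmbedding
  have hT : ∀ p ∈ T, ∀ q ∈ T,
      toLex p < toLex q → toLex (Prod.map σ π p) < toLex (Prod.map σ π q) := by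
    intro p hp q hq hpq
    rw [mem_map_equiv, Equiv.symm_symm] at hp hq
    rw [← finProdFinEquiv_lt_iff] at hpq
    rw [← permKron_lt_permKron_iff]
    exact ht hp hq hpq
  have hrows : StrictMonoOn σ (T.image Prod.fst) := by
    simp only [coe_image]
    rintro _ ⟨p, hp, rfl⟩ _ ⟨q, hq, rfl⟩ hpq
    rcases Prod.Lex.toLex_lt_toLex.mp (hT p hp q hq (Prod.Lex.toLex_lt_toLex.mpr (.inl hpq)))
      with h | ⟨h, -⟩
    · exact h
    · exact absurd (σ.injective h) hpq.ne
  have hfibre : ∀ i ∈ T.image Prod.fst, #{p ∈ T | p.1 = i} ≤ LIS π := by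
    intro i _
    rw [← card_image_of_injOn (f := Prod.snd) fun p hp q hq h => by
      rw [mem_coe, mem_filter] at hp hq
      exact Prod.ext (hp.2.trans hq.2.symm) h]
    refine card_le_LIS π ?_
    simp only [coe_image, coe_filter]
    rintro _ ⟨p, ⟨hp, rfl⟩, rfl⟩ _ ⟨q, ⟨hq, hpq₁⟩, rfl⟩ hpq
    rcases Prod.Lex.toLex_lt_toLex.mp
      (hT p hp q hq (Prod.Lex.toLex_lt_toLex.mpr (.inr ⟨hpq₁.symm, hpq⟩))) with h | ⟨-, h⟩
    · simp [hpq₁] at h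
    · exact h
  calc #t = #T := (card_map _).symm
    _ ≤ LIS π * #(T.image Prod.fst) := card_le_mul_card_image T _ hfibre
    _ ≤ LIS π * LIS σ := Nat.mul_le_mul_left _ (card_le_LIS σ hrows)
    _ = LIS σ * LIS π := mul_comm ..

theorem le_LIS_permKron : LIS σ * LIS π ≤ LIS (permKron σ π) := by
  obtain ⟨t₁, h₁, hmono₁⟩ := exists_card_eq_LIS σ
  obtain ⟨t₂, h₂, hmono₂⟩ := exists_card_eq_LIS π
  calc LIS σ * LIS π = #((t₁ ×ˢ t₂).map finProdFinEquiv.toEmbedding) := by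
        rw [card_map, card_product, h₁, h₂]
    _ ≤ _ := card_le_LIS _ ?_
  simp only [coe_map, coe_product, Equiv.coe_toEmbedding]
  rintro _ ⟨p, hp, rfl⟩ _ ⟨q, hq, rfl⟩ hpq
  rw [finProdFinEquiv_lt_iff, Prod.Lex.toLex_lt_toLex] at hpq
  rw [permKron_lt_permKron_iff, Prod.Lex.toLex_lt_toLex]
  rcases hpq with h | ⟨h, h'⟩
  · exact Or.inl (hmono₁ hp.1 hq.1 h)
  · exact Or.inr ⟨congrArg σ h, hmono₂ hp.2 hq.2 h'⟩

theorem LIS_permKron : LIS (permKron σ π) = LIS σ * LIS π :=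
  (LIS_permKron_le σ π).antisymm (le_LIS_permKron σ π)

theorem permKron_inj (ha : 0 < a) (hb : 0 < b) {σ' : Equiv.Perm (Fin a)}
    {π' : Equiv.Perm (Fin b)} : permKron σ π = permKron σ' π' ↔ σ = σ' ∧ π = π' := by
  refine ⟨fun h => ?_, fun ⟨hσ, hπ⟩ => hσ ▸ hπ ▸ rfl⟩
  have hpair (p : Fin a × Fin b) : Prod.map σ π p = Prod.map σ' π' p :=
    finProdFinEquiv.injective (by rw [← permKron_apply, ← permKron_apply, h])
  exact ⟨Equiv.ext fun i => congrArg Prod.fst (hpair (i, ⟨0, hb⟩)),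
    Equiv.ext fun r => congrArg Prod.snd (hpair (⟨0, ha⟩, r))⟩

end Kronecker

section Rotation

variable {m : ℕ}

theorem val_finRotate_pow_apply (k : ℕ) (i : Fin m) :
    ((finRotate m ^ k) i : ℕ) = (i + k) % m := by
  induction k with
  | zero => simp [Nat.mod_eq_of_lt i.isLt]
  | succ k ih =>
    have : NeZero m := i.neZero
    rw [pow_succ', Equiv.Perm.mul_apply, finRotate_apply, Fin.val_add, ih, Fin.val_one',
      Nat.add_mod_mod, Nat.mod_add_mod, add_assoc]

theorem LIS_finRotate_pow {b : ℕ} (hb : b ≤ m) : LIS (finRotate m ^ b) = max b (m - b) := by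
  set σ := finRotate m ^ b
  have hval (i : Fin m) : (σ i : ℕ) = if (i : ℕ) < m - b then i + b else i + b - m := by
    rw [val_finRotate_pow_apply]
    split_ifs
    · exact Nat.mod_eq_of_lt (by omega)
    · rw [Nat.mod_eq_sub_mod (by omega), Nat.mod_eq_of_lt (by omega)]
  set low : Finset (Fin m) := {i | (i : ℕ) < m - b}
  set high : Finset (Fin m) := {i | ¬ (i : ℕ) < m - b}
  have hlow : StrictMonoOn σ low := by
    intro i hi j hj hij
    simp only [low, mem_coe, mem_filter, mem_univ, true_and] at hi hj
    rw [Fin.lt_def] at hij ⊢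
    rw [hval, hval, if_pos hi, if_pos hj]
    omega
  have hhigh : StrictMonoOn σ high := by
    intro i hi j hj hij
    simp only [high, mem_coe, mem_filter, mem_univ, true_and] at hi hj
    rw [Fin.lt_def] at hij ⊢
    rw [hval, hval, if_neg hi, if_neg hj]
    omega
  have hsplit (t : Finset (Fin m)) (ht : StrictMonoOn σ t) : t ⊆ low ∨ t ⊆ high := by
    by_contra! h
    obtain ⟨⟨i, hi, hi_high⟩, ⟨j, hj, hj_low⟩⟩ := And.imp not_subset.mp not_subset.mp h
    simp only [low, high, mem_filter, mem_univ, true_and, not_not] at hi_high hj_low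
    have := ht hj hi (Fin.lt_def.mpr (by omega))
    rw [Fin.lt_def, hval, hval, if_pos hj_low, if_neg hi_high] at this
    omega
  have hcard_low : #low = m - b := by
    simp only [low, Fin.card_filter_val_lt]
    omega
  have hcard_high : #high = b := by
    have : #low + #high = #(univ : Finset (Fin m)) := card_filter_add_card_filter_not _
    rw [card_univ, Fintype.card_fin] at this
    omega
  refine le_antisymm (LIS_le σ fun t ht => ?_) ?_
  · rcases hsplit t ht with h | h
    · exact (card_le_card h).trans (hcard_low ▸ le_max_right _ _)
    · exact (card_le_card h).trans (hcard_high ▸ le_max_left _ _)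
  · exact max_le (hcard_high ▸ card_le_LIS σ hhigh) (hcard_low ▸ card_le_LIS σ hlow)

theorem orderOf_finRotate (hm : 0 < m) : orderOf (finRotate m) = m := by
  obtain _ | _ | m := m
  · omega
  · exact orderOf_eq_one_iff.mpr (by decide)
  · rw [isCycle_finRotate.orderOf, support_finRotate, card_univ, Fintype.card_fin]

theorem exists_finRotate_pow_eq_zpow (hm : 0 < m) (a : ℤ) :
    ∃ b : Fin m, finRotate m ^ (b : ℕ) = finRotate m ^ a := by
  classical
  obtain ⟨b, hb, hba⟩ := mem_image.mp
    (mem_zpowers_iff_mem_range_orderOf.mp (Subgroup.zpow_mem_zpowers (finRotate m) a))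
  rw [mem_range, orderOf_finRotate hm] at hb
  exact ⟨⟨b, hb⟩, hba⟩

end Rotation

theorem four_mul_sum_range_max_sub (m : ℕ) :
    4 * ∑ b ∈ range m, max b (m - b) = 3 * m ^ 2 + m % 2 := by
  induction m using Nat.twoStepInduction with
  | zero => rfl
  | one => rfl
  | more m ih _ =>
    have hshift : ∀ b ∈ range (m + 1), max (b + 1) (m + 2 - (b + 1)) = max b (m - b) + 1 := by
      intro b hb
      rw [mem_range] at hb
      rw [show m + 2 - (b + 1) = m - b + 1 by omega, Nat.succ_max_succ]
    rw [sum_range_succ', sum_congr rfl hshift, sum_add_distrib, sum_range_succ]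
    simp only [Nat.sub_self, Nat.max_zero, Nat.zero_max, Nat.sub_zero, sum_const, card_range,
      smul_eq_mul, mul_one]
    rw [show (m + 2) % 2 = m % 2 by omega]
    nlinarith

theorem finsum_mem_prod_mul {α β R : Type*} [CommSemiring R] {s : Set α} {t : Set β}
    (hs : s.Finite) (ht : t.Finite) (f : α → R) (g : β → R) :
    ∑ᶠ p ∈ s ×ˢ t, f p.1 * g p.2 = (∑ᶠ a ∈ s, f a) * ∑ᶠ b ∈ t, g b := by
  have := hs.fintype
  have := ht.fintype
  simp only [finsum_mem_eq_toFinset_sum, Set.toFinset_prod, sum_product, sum_mul_sum]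

section Butterfly

variable {m : ℕ}

def rotKron (n : ℕ) (b : Fin m) (π : Equiv.Perm (Fin (m ^ n))) :
    Equiv.Perm (Fin (m ^ (n + 1))) :=
  (finCongr (pow_succ' m n).symm).permCongr (permKron (finRotate m ^ (b : ℕ)) π)

theorem LIS_rotKron (n : ℕ) (b : Fin m) (π : Equiv.Perm (Fin (m ^ n))) :
    LIS (rotKron n b π) = max (b : ℕ) (m - b) * LIS π := by
  rw [rotKron, LIS_permCongr_finCongr, LIS_permKron, LIS_finRotate_pow b.is_le']

theorem rotKron_injective (hm : 0 < m) (n : ℕ) :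
    Function.Injective (Function.uncurry (rotKron (m := m) n)) := by
  rintro ⟨b, π⟩ ⟨c, π'⟩ h
  obtain ⟨hbc, rfl⟩ := (permKron_inj _ _ hm (pow_pos hm n)).mp ((Equiv.permCongr _).injective h)
  have hlt (d : Fin m) : (d : ℕ) ∈ Set.Iio (orderOf (finRotate m)) := by
    rw [orderOf_finRotate hm]
    exact d.isLt
  rw [Fin.ext (pow_injOn_Iio_orderOf (hlt b) (hlt c) hbc)]

theorem simpleButterfly_succ (hm : 0 < m) (n : ℕ) :
    simpleButterfly m (n + 1) =
      Function.uncurry (rotKron n) '' (Set.univ ×ˢ simpleButterfly m n) := by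
  ext σ
  constructor
  · rintro ⟨a, π, hπ, rfl⟩
    obtain ⟨b, hb⟩ := exists_finRotate_pow_eq_zpow hm a
    exact ⟨(b, π), ⟨trivial, hπ⟩, by rw [Function.uncurry_apply_pair, rotKron, hb]⟩
  · rintro ⟨⟨b, π⟩, ⟨-, hπ⟩, rfl⟩
    exact ⟨b, π, hπ, by rw [Function.uncurry_apply_pair, rotKron, zpow_natCast]⟩

theorem finsum_LIS_simpleButterfly (hm : 0 < m) (n : ℕ) :
    ∑ᶠ σ ∈ simpleButterfly m n, LIS σ = (∑ b ∈ range m, max b (m - b)) ^ n := by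
  induction n with
  | zero =>
    change ∑ᶠ σ ∈ ({1} : Set _), LIS σ = _
    rw [finsum_mem_singleton, LIS_one, pow_zero, pow_zero]
  | succ n ih =>
    rw [simpleButterfly_succ hm, finsum_mem_image (rotKron_injective hm n).injOn]
    simp only [Function.uncurry, LIS_rotKron]
    rw [finsum_mem_prod_mul Set.finite_univ (Set.toFinite _)
        (fun b : Fin m => max (b : ℕ) (m - b)) LIS, ih, finsum_mem_univ,
      finsum_eq_sum_of_fintype, Fin.sum_univ_eq_sum_range (fun b => max b (m - b)), pow_succ']

end Butterfly

/-- The average LIS over the simple `m`-nary butterfly group `B_{s,n}^{(m)}`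
(of order `mⁿ`) equals `((3m² + (m mod 2))/(4m))ⁿ`. -/
theorem simpleButterfly_expected_LIS (m n : ℕ) (hm : 2 ≤ m) :
    (1 / (m : ℝ) ^ n) * ∑ᶠ σ ∈ simpleButterfly m n, (LIS σ : ℝ) =
      ((3 * (m : ℝ) ^ 2 + ((m % 2 : ℕ) : ℝ)) / (4 * (m : ℝ))) ^ n := by
  have hsum : ((∑ b ∈ range m, max b (m - b) : ℕ) : ℝ) =
      (3 * (m : ℝ) ^ 2 + ((m % 2 : ℕ) : ℝ)) / 4 := by
    rw [eq_div_iff four_ne_zero, mul_comm]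
    exact_mod_cast four_mul_sum_range_max_sub m
  rw [← Nat.cast_finsum_mem (Set.toFinite _), finsum_LIS_simpleButterfly (by omega), Nat.cast_pow,
    hsum, one_div_mul_eq_div, ← div_pow, div_div]
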